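/- arXiv:1904.11803 — 5 statements merged into one kernel-verified Lean document; each statement's English description precedes it below -/
import Mathlib

section
/- Let m ≥ 2, let X be a set, and for every pair i ≠ j in Fin m let C_{i,j} : X → Fin m be a concrete binary classifier with C_{i,j}(x) ∈ {i, j} for all x, and assume the symmetry C_{i,j} = C_{j,i}. Define votes(x, i) = card {j | j ≠ i ∧ C_{i,j}(x) = i} and the ovo multi-classifier M(x) = {i | ∀ j, votes(x, j) ≤ votes(x, i)}. Let A be a type with concretization γ : A → Set X, and for each pair i ≠ j let C♯_{i,j} : A → Option (Fin m) be a sound abstract binary classifier: C♯_{i,j} = C♯_{j,i}, if C♯_{i,j}(a) = some y then y ∈ {i, j} and C_{i,j}(x) = y for all x ∈ γ(a). Define, for a : A, v_min(a, i) = card {j | j ≠ i ∧ C♯_{i,j}(a) = some i} and v_max(a, i) = card {j | j ≠ i ∧ (C♯_{i,j}(a) = some i ∨ C♯_{i,j}(a) = none)}, and the abstract ovo multi-classifier M♯(a) = {i | ∀ j ≠ i, v_min(a, j) ≤ v_max(a, i)}. Then M♯ is sound for M: for every a : A and every x ∈ γ(a), M(x) ⊆ M♯(a). -/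
/-! Soundness makes every certain abstract vote a concrete vote and every concrete vote a
possible abstract vote, so for a concrete winner `i` and any `j`,
`vmin a j ≤ votes x j ≤ votes x i ≤ vmax a i`. -/

open Finset

section RefinedVotes

variable {ι α : Type*} [Fintype ι] [DecidableEq α] {p : ι → Prop} [DecidablePred p]
  {c : ι → α} {s : ι → Option α}

theorem card_filter_eq_some_le_card_filter_eq
    (hsound : ∀ j, p j → ∀ z, s j = some z → c j = z) (y : α) :
    #{j | p j ∧ s j = some y} ≤ #{j | p j ∧ c j = y} := by
  refine card_le_card fun j hj => ?_
  simp only [mem_filter, mem_univ, true_and] at hj ⊢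
  exact ⟨hj.1, hsound j hj.1 y hj.2⟩

theorem card_filter_eq_le_card_filter_eq_some_or_eq_none
    (hsound : ∀ j, p j → ∀ z, s j = some z → c j = z) (y : α) :
    #{j | p j ∧ c j = y} ≤ #{j | p j ∧ (s j = some y ∨ s j = none)} := by
  refine card_le_card fun j hj => ?_
  simp only [mem_filter, mem_univ, true_and] at hj ⊢
  refine ⟨hj.1, ?_⟩
  cases hs : s j with
  | none => exact Or.inr rfl
  | some z => exact Or.inl (by rw [← hsound j hj.1 z hs, hj.2])

end RefinedVotes

theorem ovo_abstract_multiclassifier_sound_general {X A : Type*}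
    (m : ℕ) (γ : A → Set X)
    (Cc : Fin m → Fin m → X → Fin m)
    (Cs : Fin m → Fin m → A → Option (Fin m))
    (hsound : ∀ i j : Fin m, i ≠ j → ∀ (a : A) (y : Fin m), Cs i j a = some y →
      (y = i ∨ y = j) ∧ ∀ x ∈ γ a, Cc i j x = y)
    (votes : X → Fin m → ℕ)
    (hvotes : ∀ (x : X) (i : Fin m),
      votes x i = (Finset.univ.filter (fun j : Fin m => j ≠ i ∧ Cc i j x = i)).card)
    (M : X → Set (Fin m))
    (hM : ∀ x : X, M x = {i : Fin m | ∀ j : Fin m, votes x j ≤ votes x i})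
    (vmin vmax : A → Fin m → ℕ)
    (hvmin : ∀ (a : A) (i : Fin m),
      vmin a i = (Finset.univ.filter (fun j : Fin m => j ≠ i ∧ Cs i j a = some i)).card)
    (hvmax : ∀ (a : A) (i : Fin m),
      vmax a i = (Finset.univ.filter
        (fun j : Fin m => j ≠ i ∧ (Cs i j a = some i ∨ Cs i j a = none))).card)
    (Ms : A → Set (Fin m))
    (hMs : ∀ a : A, Ms a = {i : Fin m | ∀ j : Fin m, j ≠ i → vmin a j ≤ vmax a i}) :
    ∀ a : A, ∀ x ∈ γ a, M x ⊆ Ms a := by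
  intro a x hx i hi
  rw [hM] at hi
  rw [hMs]
  intro j _
  have hrefines : ∀ k, ∀ l ≠ k, ∀ y, Cs k l a = some y → Cc k l x = y :=
    fun k l hlk y hy => (hsound k l hlk.symm a y hy).2 x hx
  calc vmin a j
      ≤ votes x j := by
        rw [hvmin, hvotes]
        exact card_filter_eq_some_le_card_filter_eq (hrefines j) j
    _ ≤ votes x i := hi j
    _ ≤ vmax a i := by
        rw [hvotes, hvmax]
        exact card_filter_eq_le_card_filter_eq_some_or_eq_none (hrefines i) i

/-- Soundness of the abstract ovo multi-classifier based on sound abstract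
binary classifiers and the abstract voting procedure. -/
theorem ovo_abstract_multiclassifier_sound {X A : Type*}
    (m : ℕ) (hm : 2 ≤ m) (γ : A → Set X)
    (Cc : Fin m → Fin m → X → Fin m)
    (hrange : ∀ i j : Fin m, i ≠ j → ∀ x : X, Cc i j x = i ∨ Cc i j x = j)
    (hsymm : ∀ i j : Fin m, Cc i j = Cc j i)
    (Cs : Fin m → Fin m → A → Option (Fin m))
    (hssymm : ∀ i j : Fin m, Cs i j = Cs j i)
    (hsound : ∀ i j : Fin m, i ≠ j → ∀ (a : A) (y : Fin m), Cs i j a = some y →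
      (y = i ∨ y = j) ∧ ∀ x ∈ γ a, Cc i j x = y)
    (votes : X → Fin m → ℕ)
    (hvotes : ∀ (x : X) (i : Fin m),
      votes x i = (Finset.univ.filter (fun j : Fin m => j ≠ i ∧ Cc i j x = i)).card)
    (M : X → Set (Fin m))
    (hM : ∀ x : X, M x = {i : Fin m | ∀ j : Fin m, votes x j ≤ votes x i})
    (vmin vmax : A → Fin m → ℕ)
    (hvmin : ∀ (a : A) (i : Fin m),
      vmin a i = (Finset.univ.filter (fun j : Fin m => j ≠ i ∧ Cs i j a = some i)).card)
    (hvmax : ∀ (a : A) (i : Fin m),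
      vmax a i = (Finset.univ.filter
        (fun j : Fin m => j ≠ i ∧ (Cs i j a = some i ∨ Cs i j a = none))).card)
    (Ms : A → Set (Fin m))
    (hMs : ∀ a : A, Ms a = {i : Fin m | ∀ j : Fin m, j ≠ i → vmin a j ≤ vmax a i}) :
    ∀ a : A, ∀ x ∈ γ a, M x ⊆ Ms a :=
  ovo_abstract_multiclassifier_sound_general m γ Cc Cs hsound votes hvotes M hM vmin vmax hvmin
    hvmax Ms hMs
end

section
/- Let m ≥ 2, let X be a set, and for every pair i ≠ j in Fin m let C_{i,j} : X → Fin m be a concrete binary classifier with C_{i,j}(x) ∈ {i, j} for all x, and assume the symmetry C_{i,j} = C_{j,i}. Define votes(x, i) = card {j | j ≠ i ∧ C_{i,j}(x) = i}. Let A be a type with concretization γ : A → Set X, and for each pair i ≠ j let C♯_{i,j} : A → Option (Fin m) be a sound abstract binary classifier: C♯_{i,j} = C♯_{j,i}, if C♯_{i,j}(a) = some y then y ∈ {i, j} and C_{i,j}(x) = y for all x ∈ γ(a). Define v_min(a, i) = card {j | j ≠ i ∧ C♯_{i,j}(a) = some i} and v_max(a, i) = card {j | j ≠ i ∧ (C♯_{i,j}(a)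 = some i ∨ C♯_{i,j}(a) = none)}. Then for every a : A, every x ∈ γ(a) and every i, v_min(a, i) ≤ votes(x, i) ≤ v_max(a, i). -/
namespace Option

variable {α : Type*} {o : Option α} {c i : α}

theorem eq_some_or_eq_none_of_sound (hsound : ∀ y, o = some y → c = y) (hc : c = i) :
    o = some i ∨ o = none := by
  cases o with
  | none => exact Or.inr rfl
  | some y => exact Or.inl (congrArg some ((hsound y rfl).symm.trans hc))

end Option

namespace Finset

variable {ι α : Type*} [DecidableEq α] (s : Finset ι) (p : ι → Prop) [DecidablePred p]
  {o : ι → Option α} {c : ι → α} (i : α)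

theorem card_filter_eq_some_le_card_filter_eq_of_sound
    (hsound : ∀ j ∈ s, p j → ∀ y, o j = some y → c j = y) :
    (s.filter fun j => p j ∧ o j = some i).card ≤ (s.filter fun j => p j ∧ c j = i).card :=
  card_le_card <| monotone_filter_right s fun j hj ⟨hp, ho⟩ => ⟨hp, hsound j hj hp i ho⟩

theorem card_filter_eq_le_card_filter_eq_some_or_eq_none_of_sound
    (hsound : ∀ j ∈ s, p j → ∀ y, o j = some y → c j = y) :
    (s.filter fun j => p j ∧ c j = i).card ≤
      (s.filter fun j => p j ∧ (o j = some i ∨ o j = none)).card :=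
  card_le_card <| monotone_filter_right s fun j hj ⟨hp, hc⟩ =>
    ⟨hp, Option.eq_some_or_eq_none_of_sound (hsound j hj hp) hc⟩

end Finset

theorem ovo_abstract_votes_bracket_general {X A : Type*}
    (m : ℕ) (γ : A → Set X)
    (Cc : Fin m → Fin m → X → Fin m)
    (Cs : Fin m → Fin m → A → Option (Fin m))
    (hsound : ∀ i j : Fin m, i ≠ j → ∀ (a : A) (y : Fin m), Cs i j a = some y →
      (y = i ∨ y = j) ∧ ∀ x ∈ γ a, Cc i j x = y)
    (votes : X → Fin m → ℕ)
    (hvotes : ∀ (x : X) (i : Fin m),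
      votes x i = (Finset.univ.filter (fun j : Fin m => j ≠ i ∧ Cc i j x = i)).card)
    (vmin vmax : A → Fin m → ℕ)
    (hvmin : ∀ (a : A) (i : Fin m),
      vmin a i = (Finset.univ.filter (fun j : Fin m => j ≠ i ∧ Cs i j a = some i)).card)
    (hvmax : ∀ (a : A) (i : Fin m),
      vmax a i = (Finset.univ.filter
        (fun j : Fin m => j ≠ i ∧ (Cs i j a = some i ∨ Cs i j a = none))).card) :
    ∀ a : A, ∀ x ∈ γ a, ∀ i : Fin m, vmin a i ≤ votes x i ∧ votes x i ≤ vmax a i := by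
  intro a x hx i
  have hsound_at : ∀ j ∈ Finset.univ, j ≠ i → ∀ y, Cs i j a = some y → Cc i j x = y :=
    fun j _ hji y hy => (hsound i j hji.symm a y hy).2 x hx
  rw [hvmin, hvmax, hvotes]
  exact ⟨Finset.card_filter_eq_some_le_card_filter_eq_of_sound _ _ i hsound_at,
    Finset.card_filter_eq_le_card_filter_eq_some_or_eq_none_of_sound _ _ i hsound_at⟩

/-- The abstract voting procedure brackets the concrete number of votes:
`v_min(a,i) ≤ votes(x,i) ≤ v_max(a,i)` for every `x ∈ γ(a)`. -/
theorem ovo_abstract_votes_bracket {X A : Type*}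
    (m : ℕ) (hm : 2 ≤ m) (γ : A → Set X)
    (Cc : Fin m → Fin m → X → Fin m)
    (hrange : ∀ i j : Fin m, i ≠ j → ∀ x : X, Cc i j x = i ∨ Cc i j x = j)
    (hsymm : ∀ i j : Fin m, Cc i j = Cc j i)
    (Cs : Fin m → Fin m → A → Option (Fin m))
    (hssymm : ∀ i j : Fin m, Cs i j = Cs j i)
    (hsound : ∀ i j : Fin m, i ≠ j → ∀ (a : A) (y : Fin m), Cs i j a = some y →
      (y = i ∨ y = j) ∧ ∀ x ∈ γ a, Cc i j x = y)
    (votes : X → Fin m → ℕ)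
    (hvotes : ∀ (x : X) (i : Fin m),
      votes x i = (Finset.univ.filter (fun j : Fin m => j ≠ i ∧ Cc i j x = i)).card)
    (vmin vmax : A → Fin m → ℕ)
    (hvmin : ∀ (a : A) (i : Fin m),
      vmin a i = (Finset.univ.filter (fun j : Fin m => j ≠ i ∧ Cs i j a = some i)).card)
    (hvmax : ∀ (a : A) (i : Fin m),
      vmax a i = (Finset.univ.filter
        (fun j : Fin m => j ≠ i ∧ (Cs i j a = some i ∨ Cs i j a = none))).card) :
    ∀ a : A, ∀ x ∈ γ a, ∀ i : Fin m, vmin a i ≤ votes x i ∧ votes x i ≤ vmax a i :=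
  ovo_abstract_votes_bracket_general m γ Cc Cs hsound votes hvotes vmin vmax hvmin hvmax
end

section
/- Let X be a set, C : X → ℤ a classifier, A a type with concretization map γ : A → Set X, and C♯ : A → Option ℤ an abstract classifier that is sound for C (for every a and s, C♯(a) = some s implies C(x) = s for all x ∈ γ(a)) and complete for C (for every a, C♯(a) = none implies there exist x, x' ∈ γ(a) with C(x) ≠ C(x')). Let P : X → Set X be an adversarial region with x ∈ P(x) for every x, and let P♯ : X → A be an exact abstract perturbation, i.e., γ(P♯(x)) = P(x) for every x. Then ⟨C♯, P♯⟩ is a sound and complete robustness verifier: for every x : X, C♯(P♯(x)) = some (C(x)) if and only if C(x') = C(x) for every x' ∈ P(x). -/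
section AbstractClassifier

variable {X A β : Type*} {C : X → β} {γ : A → Set X} {Csharp : A → Option β}

theorem ne_none_of_forall_eq_of_complete
    (hcomplete : ∀ a : A, Csharp a = none → ∃ x ∈ γ a, ∃ x' ∈ γ a, C x ≠ C x')
    {a : A} {s : β} (hconst : ∀ x ∈ γ a, C x = s) : Csharp a ≠ none := fun hnone =>
  let ⟨x, hx, x', hx', hne⟩ := hcomplete a hnone
  hne ((hconst x hx).trans (hconst x' hx').symm)

theorem eq_some_iff_forall_eq_of_sound_of_complete
    (hsound : ∀ (a : A) (s : β), Csharp a = some s → ∀ x ∈ γ a, C x = s)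
    (hcomplete : ∀ a : A, Csharp a = none → ∃ x ∈ γ a, ∃ x' ∈ γ a, C x ≠ C x')
    {a : A} {x₀ : X} (hx₀ : x₀ ∈ γ a) :
    Csharp a = some (C x₀) ↔ ∀ x ∈ γ a, C x = C x₀ := by
  refine ⟨hsound a (C x₀), fun hconst => ?_⟩
  obtain ⟨s, hs⟩ := Option.ne_none_iff_exists'.mp
    (ne_none_of_forall_eq_of_complete hcomplete hconst)
  rw [hs, hsound a s hs x₀ hx₀]

end AbstractClassifier

/-- A sound and complete abstract classifier together with an exact abstract
perturbation is a sound and complete robustness verifier. -/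
theorem sound_complete_robustness_verifier {X A : Type*}
    (C : X → ℤ) (γ : A → Set X)
    (Csharp : A → Option ℤ)
    (hsound : ∀ (a : A) (s : ℤ), Csharp a = some s → ∀ x ∈ γ a, C x = s)
    (hcomplete : ∀ a : A, Csharp a = none →
      ∃ x ∈ γ a, ∃ x' ∈ γ a, C x ≠ C x')
    (P : X → Set X) (hP : ∀ x : X, x ∈ P x)
    (Psharp : X → A)
    (hPsharp : ∀ x : X, γ (Psharp x) = P x) :
    ∀ x : X, Csharp (Psharp x) = some (C x) ↔ ∀ x' ∈ P x, C x' = C x := by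
  intro x
  rw [← hPsharp x]
  exact eq_some_iff_forall_eq_of_sound_of_complete hsound hcomplete (hPsharp x ▸ hP x)
end

section
/- Let k ≥ 1, a₀ : ℝ and a : Fin k → ℝ. Then the range of the affine form â(ε) = a₀ + ∑_j a j * ε j over all noise vectors ε with ε j ∈ [-1, 1] for every j is exactly the closed interval [a₀ - ∑_j |a j|, a₀ + ∑_j |a j|]; that is, {a₀ + ∑_j a j * ε j | ∀ j, ε j ∈ Icc (-1) 1} = Icc (a₀ - ∑_j |a j|) (a₀ + ∑_j |a j|). -/
/-! The triangle inequality bounds `|∑ j, a j * ε j|` by `∑ j, |a j|` on the cube; the bound is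
attained at `ε = sign a`, and the multiples `c • sign a` with `|c| ≤ 1` sweep out the whole interval. -/

open Finset

variable {ι : Type*} [Fintype ι]

lemma SignType.abs_coe_le_one (s : SignType) : |(s : ℝ)| ≤ 1 := by
  cases s <;> simp

lemma abs_sum_mul_le_sum_abs (a ε : ι → ℝ) (hε : ∀ j, |ε j| ≤ 1) :
    |∑ j, a j * ε j| ≤ ∑ j, |a j| :=
  calc |∑ j, a j * ε j| ≤ ∑ j, |a j * ε j| := abs_sum_le_sum_abs _ _
    _ ≤ ∑ j, |a j| := sum_le_sum fun j _ => by
        rw [abs_mul]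
        exact mul_le_of_le_one_right (abs_nonneg _) (hε j)

lemma sum_mul_mul_sign (a : ι → ℝ) (c : ℝ) :
    ∑ j, a j * (c * SignType.sign (a j)) = c * ∑ j, |a j| := by
  simp only [mul_left_comm (a _), self_mul_sign, mul_sum]

lemma exists_abs_le_one_sum_mul_eq (a : ι → ℝ) {s : ℝ} (hs : |s| ≤ ∑ j, |a j|) :
    ∃ ε : ι → ℝ, (∀ j, |ε j| ≤ 1) ∧ ∑ j, a j * ε j = s := by
  set S := ∑ j, |a j|
  have hS : 0 ≤ S := (abs_nonneg s).trans hs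
  refine ⟨fun j => s / S * SignType.sign (a j), fun j => ?_, ?_⟩
  · have hc : |s / S| ≤ 1 := by
      rw [abs_div, abs_of_nonneg hS]
      exact div_le_one_of_le₀ hs hS
    rw [abs_mul]
    exact mul_le_one₀ hc (abs_nonneg _) (SignType.abs_coe_le_one _)
  · rw [sum_mul_mul_sign]
    rcases hS.eq_or_lt with hS0 | hSpos
    · rw [← hS0] at hs ⊢
      simp [abs_nonpos_iff.mp hs]
    · exact div_mul_cancel₀ s hSpos.ne'

theorem affine_form_range_general (k : ℕ) (a₀ : ℝ) (a : Fin k → ℝ) :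
    {t : ℝ | ∃ ε : Fin k → ℝ, (∀ j, ε j ∈ Set.Icc (-1 : ℝ) 1) ∧
        t = a₀ + ∑ j, a j * ε j}
      = Set.Icc (a₀ - ∑ j, |a j|) (a₀ + ∑ j, |a j|) := by
  ext t
  constructor
  · rintro ⟨ε, hε, rfl⟩
    have hbound := abs_le.mp (abs_sum_mul_le_sum_abs a ε fun j => abs_le.mpr (hε j))
    constructor <;> linarith [hbound.1, hbound.2]
  · rintro ⟨hlo, hhi⟩
    obtain ⟨ε, hε, hsum⟩ :=
      exists_abs_le_one_sum_mul_eq a (abs_le.mpr ⟨by linarith, by linarith⟩ : |t - a₀| ≤ _)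
    exact ⟨ε, fun j => abs_le.mp (hε j), by linarith⟩

/-- Exactness of the interval concretization of an affine form: the range of
`ε ↦ a₀ + ∑_j a j * ε j` over `[-1,1]^k` is `[a₀ - ∑_j |a j|, a₀ + ∑_j |a j|]`. -/
theorem affine_form_range (k : ℕ) (hk : 1 ≤ k) (a₀ : ℝ) (a : Fin k → ℝ) :
    {t : ℝ | ∃ ε : Fin k → ℝ, (∀ j, ε j ∈ Set.Icc (-1 : ℝ) 1) ∧
        t = a₀ + ∑ j, a j * ε j}
      = Set.Icc (a₀ - ∑ j, |a j|) (a₀ + ∑ j, |a j|) :=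
  affine_form_range_general k a₀ a
end

section
/- Let k ≥ 1 and let two reduced affine forms be given by centers a₀, b₀ : ℝ, coefficients a, b : Fin k → ℝ, and accumulated-error radii a_r, b_r : ℝ with a_r ≥ 0 and b_r ≥ 0. Define, for ε : Fin k → ℝ and η_a, η_b : ℝ, the nonlinear part f(ε, η_a, η_b) = (∑_j a j * ε j + a_r * η_a) * (∑_j b j * ε j + b_r * η_b), and let R_max and R_min be respectively the supremum and infimum of f over the compact set where every ε j ∈ [-1,1] and η_a, η_b ∈ [-1,1]. Then for every such ε, η_a, η_b, the product (a₀ + ∑_j a j * ε j + a_r * η_a) * (b₀ + ∑_j b j * ε j + b_r * η_b) lies in the closed interval [c - r, c + r], where c = a₀*b₀ + (R_max + R_min)/2 and r = ∑_j |a₀ * b j + b₀ * a j| + |a₀| * b_r + |b₀| * a_r + (R_max - R_min)/2. -/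
/-!
Expanding the product splits it into `a₀ b₀`, a part that is affine in the noise symbols, and
the product `f` of the two centered parts. The affine part is bounded by the sum of the absolute
values of its coefficients, while `f` ranges over the box between `Rmin` and `Rmax`; these
extrema are finite because `|f|` is bounded on the box by the product of the coefficient sums.
-/

open Finset Set

section AffineBounds

variable {ι : Type*} [Fintype ι]

lemma abs_mul_le_of_mem_Icc (c : ℝ) {η : ℝ} (hη : η ∈ Icc (-1 : ℝ) 1) : |c * η| ≤ |c| := by
  rw [abs_mul]
  exact mul_le_of_le_one_right (abs_nonneg c) (abs_le.mpr hη)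

lemma abs_sum_mul_le_of_mem_Icc (c ε : ι → ℝ) (hε : ∀ i, ε i ∈ Icc (-1 : ℝ) 1) :
    |∑ i, c i * ε i| ≤ ∑ i, |c i| :=
  (abs_sum_le_sum_abs _ _).trans (sum_le_sum fun i _ ↦ abs_mul_le_of_mem_Icc (c i) (hε i))

lemma abs_sum_mul_add_mul_le_of_mem_Icc (c ε : ι → ℝ) (d η : ℝ)
    (hε : ∀ i, ε i ∈ Icc (-1 : ℝ) 1) (hη : η ∈ Icc (-1 : ℝ) 1) :
    |∑ i, c i * ε i + d * η| ≤ ∑ i, |c i| + |d| :=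
  (abs_add_le _ _).trans
    (add_le_add (abs_sum_mul_le_of_mem_Icc c ε hε) (abs_mul_le_of_mem_Icc d hη))

lemma abs_mul_centered_le (a b ε : ι → ℝ) (ar br ηa ηb : ℝ)
    (hε : ∀ i, ε i ∈ Icc (-1 : ℝ) 1) (hηa : ηa ∈ Icc (-1 : ℝ) 1) (hηb : ηb ∈ Icc (-1 : ℝ) 1) :
    |(∑ i, a i * ε i + ar * ηa) * (∑ i, b i * ε i + br * ηb)| ≤
      (∑ i, |a i| + |ar|) * (∑ i, |b i| + |br|) := by
  rw [abs_mul]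
  exact mul_le_mul (abs_sum_mul_add_mul_le_of_mem_Icc a ε ar ηa hε hηa)
    (abs_sum_mul_add_mul_le_of_mem_Icc b ε br ηb hε hηb) (abs_nonneg _) (by positivity)

lemma abs_mul_affine_sub_le (a₀ b₀ ar br : ℝ) (a b ε : ι → ℝ) (ηa ηb : ℝ)
    (har : 0 ≤ ar) (hbr : 0 ≤ br)
    (hε : ∀ i, ε i ∈ Icc (-1 : ℝ) 1) (hηa : ηa ∈ Icc (-1 : ℝ) 1) (hηb : ηb ∈ Icc (-1 : ℝ) 1) :
    |(a₀ + ∑ i, a i * ε i + ar * ηa) * (b₀ + ∑ i, b i * ε i + br * ηb) -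
        (a₀ * b₀ + (∑ i, a i * ε i + ar * ηa) * (∑ i, b i * ε i + br * ηb))| ≤
      ∑ i, |a₀ * b i + b₀ * a i| + |a₀| * br + |b₀| * ar := by
  have hlinear : a₀ * ∑ i, b i * ε i + b₀ * ∑ i, a i * ε i =
      ∑ i, (a₀ * b i + b₀ * a i) * ε i := by
    simp only [mul_sum, ← sum_add_distrib, add_mul, mul_assoc]
  have hsplit : (a₀ + ∑ i, a i * ε i + ar * ηa) * (b₀ + ∑ i, b i * ε i + br * ηb) -
      (a₀ * b₀ + (∑ i, a i * ε i + ar * ηa) * (∑ i, b i * ε i + br * ηb)) =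
      ∑ i, (a₀ * b i + b₀ * a i) * ε i + (a₀ * br) * ηb + (b₀ * ar) * ηa := by
    rw [← hlinear]; ring
  have hb : |a₀ * br * ηb| ≤ |a₀| * br :=
    (abs_mul_le_of_mem_Icc _ hηb).trans_eq (by rw [abs_mul, abs_of_nonneg hbr])
  have ha : |b₀ * ar * ηa| ≤ |b₀| * ar :=
    (abs_mul_le_of_mem_Icc _ hηa).trans_eq (by rw [abs_mul, abs_of_nonneg har])
  rw [hsplit]
  exact (abs_add_three _ _ _).trans
    (add_le_add_three (abs_sum_mul_le_of_mem_Icc _ ε hε) hb ha)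

end AffineBounds

lemma mem_Icc_csInf_csSup {α : Type*} [ConditionallyCompleteLattice α] {s : Set α} {x : α}
    (hbelow : BddBelow s) (habove : BddAbove s) (hx : x ∈ s) : x ∈ Icc (sInf s) (sSup s) :=
  ⟨csInf_le hbelow hx, le_csSup habove hx⟩

lemma mem_Icc_add_midpoint_of_abs_sub_le {x y c r m M : ℝ} (hy : y ∈ Icc m M)
    (hxy : |x - (c + y)| ≤ r) :
    x ∈ Icc ((c + (M + m) / 2) - (r + (M - m) / 2)) ((c + (M + m) / 2) + (r + (M - m) / 2)) := by
  obtain ⟨hxy₁, hxy₂⟩ := abs_le.mp hxy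
  exact ⟨by linarith [hy.1], by linarith [hy.2]⟩

theorem raf_mul_sound_general (k : ℕ)
    (a₀ b₀ ar br : ℝ) (a b : Fin k → ℝ) (har : 0 ≤ ar) (hbr : 0 ≤ br)
    (f : (Fin k → ℝ) → ℝ → ℝ → ℝ)
    (hf : ∀ (ε : Fin k → ℝ) (ηa ηb : ℝ),
      f ε ηa ηb = ((∑ j, a j * ε j) + ar * ηa) * ((∑ j, b j * ε j) + br * ηb))
    (Rmax Rmin : ℝ)
    (hRmax : Rmax = sSup {t : ℝ | ∃ ε : Fin k → ℝ, ∃ ηa ηb : ℝ,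
      (∀ j, ε j ∈ Set.Icc (-1 : ℝ) 1) ∧ ηa ∈ Set.Icc (-1 : ℝ) 1 ∧
      ηb ∈ Set.Icc (-1 : ℝ) 1 ∧ t = f ε ηa ηb})
    (hRmin : Rmin = sInf {t : ℝ | ∃ ε : Fin k → ℝ, ∃ ηa ηb : ℝ,
      (∀ j, ε j ∈ Set.Icc (-1 : ℝ) 1) ∧ ηa ∈ Set.Icc (-1 : ℝ) 1 ∧
      ηb ∈ Set.Icc (-1 : ℝ) 1 ∧ t = f ε ηa ηb}) :
    ∀ (ε : Fin k → ℝ) (ηa ηb : ℝ),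
      (∀ j, ε j ∈ Set.Icc (-1 : ℝ) 1) → ηa ∈ Set.Icc (-1 : ℝ) 1 →
      ηb ∈ Set.Icc (-1 : ℝ) 1 →
      (a₀ + (∑ j, a j * ε j) + ar * ηa) * (b₀ + (∑ j, b j * ε j) + br * ηb) ∈
        Set.Icc
          ((a₀ * b₀ + (Rmax + Rmin) / 2) -
            ((∑ j, |a₀ * b j + b₀ * a j|) + |a₀| * br + |b₀| * ar + (Rmax - Rmin) / 2))
          ((a₀ * b₀ + (Rmax + Rmin) / 2) +
            ((∑ j, |a₀ * b j + b₀ * a j|) + |a₀| * br + |b₀| * ar + (Rmax - Rmin) / 2)) := by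
  intro ε ηa ηb hε hηa hηb
  have hf_mem : f ε ηa ηb ∈ Icc Rmin Rmax := by
    subst hRmax hRmin
    refine mem_Icc_csInf_csSup (Bornology.IsBounded.bddBelow ?bounded)
      (Bornology.IsBounded.bddAbove ?bounded) ⟨ε, ηa, ηb, hε, hηa, hηb, rfl⟩
    refine isBounded_iff_forall_norm_le.mpr ⟨(∑ j, |a j| + |ar|) * (∑ j, |b j| + |br|), ?_⟩
    rintro _ ⟨ε', ηa', ηb', hε', hηa', hηb', rfl⟩
    rw [hf, Real.norm_eq_abs]
    exact abs_mul_centered_le a b ε' ar br ηa' ηb' hε' hηa' hηb'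
  rw [hf] at hf_mem
  exact mem_Icc_add_midpoint_of_abs_sub_le hf_mem
    (abs_mul_affine_sub_le a₀ b₀ ar br a b ε ηa ηb har hbr hε hηa hηb)

/-- Soundness of the Skalna–Hladík abstract multiplication of reduced affine
forms: the concrete product of values of two RAFs on a shared noise vector lies
in the interval concretization `[c - r, c + r]` of the abstract product. -/
theorem raf_mul_sound (k : ℕ) (hk : 1 ≤ k)
    (a₀ b₀ ar br : ℝ) (a b : Fin k → ℝ) (har : 0 ≤ ar) (hbr : 0 ≤ br)
    (f : (Fin k → ℝ) → ℝ → ℝ → ℝ)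
    (hf : ∀ (ε : Fin k → ℝ) (ηa ηb : ℝ),
      f ε ηa ηb = ((∑ j, a j * ε j) + ar * ηa) * ((∑ j, b j * ε j) + br * ηb))
    (Rmax Rmin : ℝ)
    (hRmax : Rmax = sSup {t : ℝ | ∃ ε : Fin k → ℝ, ∃ ηa ηb : ℝ,
      (∀ j, ε j ∈ Set.Icc (-1 : ℝ) 1) ∧ ηa ∈ Set.Icc (-1 : ℝ) 1 ∧
      ηb ∈ Set.Icc (-1 : ℝ) 1 ∧ t = f ε ηa ηb})
    (hRmin : Rmin = sInf {t : ℝ | ∃ ε : Fin k → ℝ, ∃ ηa ηb : ℝ,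
      (∀ j, ε j ∈ Set.Icc (-1 : ℝ) 1) ∧ ηa ∈ Set.Icc (-1 : ℝ) 1 ∧
      ηb ∈ Set.Icc (-1 : ℝ) 1 ∧ t = f ε ηa ηb}) :
    ∀ (ε : Fin k → ℝ) (ηa ηb : ℝ),
      (∀ j, ε j ∈ Set.Icc (-1 : ℝ) 1) → ηa ∈ Set.Icc (-1 : ℝ) 1 →
      ηb ∈ Set.Icc (-1 : ℝ) 1 →
      (a₀ + (∑ j, a j * ε j) + ar * ηa) * (b₀ + (∑ j, b j * ε j) + br * ηb) ∈
        Set.Icc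
          ((a₀ * b₀ + (Rmax + Rmin) / 2) -
            ((∑ j, |a₀ * b j + b₀ * a j|) + |a₀| * br + |b₀| * ar + (Rmax - Rmin) / 2))
          ((a₀ * b₀ + (Rmax + Rmin) / 2) +
            ((∑ j, |a₀ * b j + b₀ * a j|) + |a₀| * br + |b₀| * ar + (Rmax - Rmin) / 2)) :=
  raf_mul_sound_general k a₀ b₀ ar br a b har hbr f hf Rmax Rmin hRmax hRmin
end
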